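/- Let G be a starlike tree. Then the second largest adjacency eigenvalue of the line graph L(G) is strictly less than 2. -/

import Mathlib

open Polynomial

instance lineGraphAdjDecidable {V : Type*} (G : SimpleGraph V) [Fintype V] [DecidableEq V]
    [DecidableRel G.Adj] : DecidableRel G.lineGraph.Adj :=
  fun _ _ => decidable_of_iff _ SimpleGraph.lineGraph_adj_iff_exists.symm

/-!
Let `N` be the vertex–edge incidence matrix of `G`. Then `Nᵀ N = A(L(G)) + 2`, so for `x` on the
edges, `xᵀ A(L(G)) x + 2‖x‖² = ∑ᵥ yᵥ²` where `yᵥ` is the sum of `x` over the edges at `v`.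
At a vertex of degree at most `2`, Cauchy–Schwarz gives `yᵥ² ≤ 2 ∑_{e ∋ v} xₑ²`; on the hyperplane
`y_c = 0` at the centre `c` this holds trivially, and summing (every edge has two ends) gives
`xᵀ A(L(G)) x ≤ 2‖x‖²`. Equality forces `x` to vanish on the edges at `c`, and at any other vertex
on all its edges as soon as on one of them; by connectedness `x = 0`. So the quadratic form is
`< 2` on a hyperplane, and by the min–max principle at most one eigenvalue is `≥ 2`.
-/

open Matrix Finset

lemma exists_ne_zero_mul_add_mul_eq_zero {K : Type*} [Field K] (p q : K) :
    ∃ s r : K, (s ≠ 0 ∨ r ≠ 0) ∧ s * p + r * q = 0 := by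
  by_cases hp : p = 0
  · exact ⟨1, 0, .inl one_ne_zero, by simp [hp]⟩
  · exact ⟨q, -p, .inr (neg_ne_zero.mpr hp), by ring⟩

section SumSq

variable {ι R : Type*} [Field R] [LinearOrder R] [IsStrictOrderedRing R] {s : Finset ι}
  {f : ι → R}

lemma sq_sum_le_two_mul_sum_sq (hs : #s ≤ 2) : (∑ i ∈ s, f i) ^ 2 ≤ 2 * ∑ i ∈ s, f i ^ 2 :=
  sq_sum_le_card_mul_sum_sq.trans <| by
    gcongr
    exact_mod_cast hs

lemma eq_zero_of_sq_sum_eq_two_mul_sum_sq [DecidableEq ι] (hs : #s ≤ 2) {j : ι} (hj : j ∈ s)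
    (hfj : f j = 0) (h : (∑ i ∈ s, f i) ^ 2 = 2 * ∑ i ∈ s, f i ^ 2) : ∀ i ∈ s, f i = 0 := by
  intro i hi
  rcases eq_or_ne i j with rfl | hij
  · exact hfj
  have hs' : s.erase j = {i} :=
    eq_singleton_iff_unique_mem.mpr ⟨mem_erase.mpr ⟨hij, hi⟩, fun k hk =>
      card_le_one.mp (by rw [card_erase_of_mem hj]; omega) k hk i (mem_erase.mpr ⟨hij, hi⟩)⟩
  rw [← sum_erase s hfj, ← sum_erase s (by simp [hfj] : f j ^ 2 = 0), hs', sum_singleton,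
    sum_singleton] at h
  nlinarith

end SumSq

namespace Matrix.IsHermitian

variable {n : Type*} [Fintype n] [DecidableEq n] {M : Matrix n n ℝ} (hM : M.IsHermitian)

lemma dotProduct_eigenvectorBasis (i j : n) :
    ⇑(hM.eigenvectorBasis i) ⬝ᵥ ⇑(hM.eigenvectorBasis j) = if i = j then 1 else 0 := by
  have := orthonormal_iff_ite.mp hM.eigenvectorBasis.orthonormal i j
  rwa [EuclideanSpace.inner_eq_star_dotProduct, star_trivial, dotProduct_comm] at this

lemma card_filter_roots_charpoly (p : ℝ → Prop) [DecidablePred p] :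
    (M.charpoly.roots.filter p).card = #{i | p (hM.eigenvalues i)} := by
  simp [hM.roots_charpoly_eq_eigenvalues, Multiset.filter_map, Finset.card_def, Finset.filter_val]

/-- The span of two eigenvectors with eigenvalues `≥ t` would meet the hyperplane `w⊥`. -/
lemma card_eigenvalues_ge_le_one {t : ℝ} (w : n → ℝ)
    (h : ∀ x, w ⬝ᵥ x = 0 → x ≠ 0 → x ⬝ᵥ (M *ᵥ x) < t * (x ⬝ᵥ x)) :
    #{i | t ≤ hM.eigenvalues i} ≤ 1 := by
  refine Finset.card_le_one.mpr fun a ha b hb => by_contra fun hab => ?_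
  simp only [Finset.mem_filter, Finset.mem_univ, true_and] at ha hb
  set u := fun i => ⇑(hM.eigenvectorBasis i)
  have hu := hM.dotProduct_eigenvectorBasis
  obtain ⟨s, r, hsr, hw⟩ := exists_ne_zero_mul_add_mul_eq_zero (w ⬝ᵥ u a) (w ⬝ᵥ u b)
  set z := s • u a + r • u b
  have hzz : z ⬝ᵥ z = s ^ 2 + r ^ 2 := by
    simp only [z, add_dotProduct, dotProduct_add, smul_dotProduct, dotProduct_smul, smul_eq_mul,
      u, hu, ↓reduceIte, if_neg hab, if_neg (Ne.symm hab)]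
    ring
  have hMz : z ⬝ᵥ (M *ᵥ z) = s ^ 2 * hM.eigenvalues a + r ^ 2 * hM.eigenvalues b := by
    simp only [z, mulVec_add, mulVec_smul, u, hM.mulVec_eigenvectorBasis, add_dotProduct,
      dotProduct_add, smul_dotProduct, dotProduct_smul, smul_eq_mul, hu, ↓reduceIte, if_neg hab,
      if_neg (Ne.symm hab)]
    ring
  have hz_pos : 0 < z ⬝ᵥ z := by
    rw [hzz]
    rcases hsr with hs | hr <;> positivity
  have hwz : w ⬝ᵥ z = 0 := by
    simp only [z, dotProduct_add, dotProduct_smul, smul_eq_mul, hw]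
  have := h z hwz fun hz => by simp [hz] at hz_pos
  rw [hMz, hzz] at this
  nlinarith

end Matrix.IsHermitian

namespace SimpleGraph

variable {V : Type*} [Fintype V] [DecidableEq V]

def incidentEdges (G : SimpleGraph V) [DecidableRel G.Adj] (v : V) : Finset G.edgeSet :=
  {e | v ∈ (e : Sym2 V)}

def edgeIncMatrix (G : SimpleGraph V) (R : Type*) [Zero R] [One R] : Matrix V G.edgeSet R :=
  of fun v e => if v ∈ (e : Sym2 V) then 1 else 0

variable {G : SimpleGraph V}

lemma card_filter_mem_edge (e : G.edgeSet) : #{v | v ∈ (e : Sym2 V)} = 2 := by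
  obtain ⟨e, he⟩ := e
  induction e with
  | _ a b =>
    rw [show ({v | v ∈ s(a, b)} : Finset V) = {a, b} by ext; simp]
    exact card_pair (G.ne_of_adj he)

variable [DecidableRel G.Adj]

@[simp]
lemma mem_incidentEdges {v : V} {e : G.edgeSet} : e ∈ G.incidentEdges v ↔ v ∈ (e : Sym2 V) := by
  simp [incidentEdges]

lemma card_incidentEdges (v : V) : #(G.incidentEdges v) = G.degree v := by
  rw [← card_incidenceFinset_eq_degree, ← Finset.card_map (Function.Embedding.subtype _)]
  congr 1
  ext e
  simp [incidenceSet, and_comm]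

lemma card_filter_mem_mem (e f : G.edgeSet) :
    #{v | v ∈ (e : Sym2 V) ∧ v ∈ (f : Sym2 V)} =
      if e = f then 2 else if G.lineGraph.Adj e f then 1 else 0 := by
  split_ifs with hef hadj
  · subst hef
    simpa using card_filter_mem_edge e
  · obtain ⟨-, v, hve, hvf⟩ := lineGraph_adj_iff_exists.mp hadj
    refine card_eq_one.mpr ⟨v, eq_singleton_iff_unique_mem.mpr ⟨by simp [hve, hvf], ?_⟩⟩
    simp only [mem_filter, mem_univ, true_and]
    rintro w ⟨hwe, hwf⟩
    by_contra hwv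
    exact hef (Subtype.ext (((Sym2.mem_and_mem_iff hwv).mp ⟨hwe, hve⟩).trans
      ((Sym2.mem_and_mem_iff hwv).mp ⟨hwf, hvf⟩).symm))
  · refine card_eq_zero.mpr (filter_eq_empty_iff.mpr fun v _ hv => hadj ?_)
    exact lineGraph_adj_iff_exists.mpr ⟨hef, v, hv⟩

lemma edgeIncMatrix_transpose_mul (R : Type*) [NonAssocSemiring R] :
    (G.edgeIncMatrix R)ᵀ * G.edgeIncMatrix R = G.lineGraph.adjMatrix R + 2 := by
  ext e f
  simp only [mul_apply, transpose_apply, edgeIncMatrix, of_apply, ite_zero_mul_ite_zero, mul_one,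
    sum_boole, card_filter_mem_mem, Matrix.add_apply, adjMatrix_apply, ofNat_apply]
  split_ifs with hef hadj <;> simp_all

lemma edgeIncMatrix_mulVec_apply {R : Type*} [NonAssocSemiring R] (x : G.edgeSet → R) (v : V) :
    (G.edgeIncMatrix R *ᵥ x) v = ∑ e ∈ G.incidentEdges v, x e := by
  simp [mulVec, dotProduct, edgeIncMatrix, incidentEdges, sum_filter]

lemma sum_sum_incidentEdges {M : Type*} [AddCommMonoid M] (f : G.edgeSet → M) :
    ∑ v, ∑ e ∈ G.incidentEdges v, f e = 2 • ∑ e, f e := by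
  simp only [incidentEdges, sum_filter]
  rw [sum_comm, smul_sum]
  refine sum_congr rfl fun e _ => ?_
  rw [← sum_filter, sum_const, card_filter_mem_edge]

lemma dotProduct_adjMatrix_lineGraph_mulVec (x : G.edgeSet → ℝ) :
    x ⬝ᵥ (G.lineGraph.adjMatrix ℝ *ᵥ x) + 2 * (x ⬝ᵥ x) =
      ∑ v, (∑ e ∈ G.incidentEdges v, x e) ^ 2 := by
  set N := G.edgeIncMatrix ℝ
  calc x ⬝ᵥ (G.lineGraph.adjMatrix ℝ *ᵥ x) + 2 * (x ⬝ᵥ x)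
      = x ⬝ᵥ ((Nᵀ * N) *ᵥ x) := by
        rw [edgeIncMatrix_transpose_mul, add_mulVec, ofNat_mulVec, dotProduct_add, dotProduct_smul,
          smul_eq_mul]
    _ = (N *ᵥ x) ⬝ᵥ (N *ᵥ x) := by
        rw [← mulVec_mulVec, dotProduct_mulVec, vecMul_transpose]
    _ = ∑ v, (∑ e ∈ G.incidentEdges v, x e) ^ 2 := by
        simp only [dotProduct, edgeIncMatrix_mulVec_apply, sq, N]

lemma Connected.forall_edge_of_incidentEdges (hG : G.Connected) {P : G.edgeSet → Prop} {c : V}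
    (hc : ∀ e ∈ G.incidentEdges c, P e)
    (hP : ∀ v, ∀ e ∈ G.incidentEdges v, P e → ∀ f ∈ G.incidentEdges v, P f) (e : G.edgeSet) :
    P e := by
  have hall : ∀ v, ∀ e ∈ G.incidentEdges v, P e := by
    intro v
    obtain ⟨p⟩ := hG.preconnected v c
    induction p with
    | nil => exact hc
    | cons h p ih => exact hP _ ⟨s(_, _), h⟩ (by simp) (ih hc _ (by simp))
  obtain ⟨e, he⟩ := e
  induction e with
  | _ a b => exact hall a _ (by simp)

lemma dotProduct_adjMatrix_lineGraph_mulVec_lt (hG : G.Connected) {c : V}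
    (hdeg : ∀ v ≠ c, G.degree v ≤ 2) {x : G.edgeSet → ℝ}
    (hxc : ∑ e ∈ G.incidentEdges c, x e = 0) (hx : x ≠ 0) :
    x ⬝ᵥ (G.lineGraph.adjMatrix ℝ *ᵥ x) < 2 * (x ⬝ᵥ x) := by
  set defect : V → ℝ := fun v =>
    2 * ∑ e ∈ G.incidentEdges v, x e ^ 2 - (∑ e ∈ G.incidentEdges v, x e) ^ 2
  have hdefect_sum : ∑ v, defect v = 2 * (x ⬝ᵥ x) - x ⬝ᵥ (G.lineGraph.adjMatrix ℝ *ᵥ x) := by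
    have hxx : x ⬝ᵥ x = ∑ e, x e ^ 2 := by simp only [dotProduct, sq]
    rw [sum_sub_distrib, ← mul_sum, sum_sum_incidentEdges, ← dotProduct_adjMatrix_lineGraph_mulVec,
      hxx, nsmul_eq_mul]
    ring
  have hdefect_nonneg : ∀ v, 0 ≤ defect v := by
    intro v
    rcases eq_or_ne v c with rfl | hv
    · have := sum_nonneg fun e (_ : e ∈ G.incidentEdges v) => sq_nonneg (x e)
      simp only [defect, hxc]
      linarith
    · exact sub_nonneg.mpr (sq_sum_le_two_mul_sum_sq ((card_incidentEdges v).trans_le (hdeg v hv)))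
  by_contra! hle
  have hdefect_zero : ∀ v, defect v = 0 := fun v =>
    (sum_eq_zero_iff_of_nonneg fun v _ => hdefect_nonneg v).mp
      (le_antisymm (by linarith) (sum_nonneg fun v _ => hdefect_nonneg v)) v (mem_univ v)
  have hc : ∀ e ∈ G.incidentEdges c, x e = 0 := by
    have hsq : ∑ e ∈ G.incidentEdges c, x e ^ 2 = 0 := by simpa [defect, hxc] using hdefect_zero c
    intro e he
    exact pow_eq_zero_iff two_ne_zero |>.mp <|
      (sum_eq_zero_iff_of_nonneg fun e _ => sq_nonneg (x e)).mp hsq e he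
  refine hx (funext (hG.forall_edge_of_incidentEdges (P := fun e => x e = 0) hc ?_))
  intro v e he hxe
  rcases eq_or_ne v c with rfl | hv
  · exact hc
  · exact eq_zero_of_sq_sum_eq_two_mul_sum_sq ((card_incidentEdges v).trans_le (hdeg v hv)) he hxe
      (sub_eq_zero.mp (hdefect_zero v)).symm

end SimpleGraph

/-- If `G` is a starlike tree (a tree with exactly one vertex of degree greater than 2),
then the second largest adjacency eigenvalue of its line graph is strictly less than `2`;
equivalently, at most one adjacency eigenvalue of `L(G)` (with multiplicity) is `≥ 2`. -/
theorem lineGraph_starlikeTree_second_eigenvalue_lt_two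
    {V : Type*} [Fintype V] [DecidableEq V] (G : SimpleGraph V) [DecidableRel G.Adj]
    (htree : G.IsTree) (hstar : ∃! v : V, 2 < G.degree v) :
    (((G.lineGraph.adjMatrix ℝ).charpoly.roots).filter (fun μ => 2 ≤ μ)).card ≤ 1 := by
  obtain ⟨c, -, hc⟩ := hstar
  have hdeg : ∀ v ≠ c, G.degree v ≤ 2 := fun v hv => not_lt.mp (mt (hc v) hv)
  have hA : (G.lineGraph.adjMatrix ℝ).IsHermitian := G.lineGraph.isHermitian_adjMatrix ℝ
  rw [hA.card_filter_roots_charpoly]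
  exact hA.card_eigenvalues_ge_le_one (G.edgeIncMatrix ℝ c) fun x hxc hx =>
    SimpleGraph.dotProduct_adjMatrix_lineGraph_mulVec_lt htree.connected hdeg
      ((G.edgeIncMatrix_mulVec_apply x c).symm.trans hxc) hx
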